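/- The 'more popular than' relation on matchings is not transitive: there exists a bipartite preference instance and matchings M1, M2, M3 with M1 ≺ M2, M2 ≺ M3, and M3 ≺ M1. -/

import Mathlib

/-!
Condorcet's paradox in matching form. Let `n + 3` people all rank the items `0, 1, …, n + 2` in
this order, and let `rotation k` match person `a` to item `a + k` (mod `n + 3`). Passing from
`rotation k` to `rotation (k + 1)` moves every person one step down the list, except the one
person who held the last item and now wraps around to the first. So `rotation k` beats
`rotation (k + 1)` by `n + 2` votes to one, and for three people the rotations by `2, 1, 0` form
a cycle.
-/

/-- A matching assigns to each person at most one item, injectively on items. -/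
def IsMatching {α β : Type*} (M : α → Option β) : Prop :=
  ∀ a a' b, M a = some b → M a' = some b → a = a'

/-- Person `a` prefers matching `M` to `M'`. -/
def Prefers {α β : Type*} (rank : α → β → ℕ∞) (M M' : α → Option β) (a : α) : Prop :=
  (∃ b, M a = some b ∧ M' a = none) ∨
  (∃ b b', M a = some b ∧ M' a = some b' ∧ rank a b < rank a b')

/-- `M'` is more popular than `M`. -/
def MorePopular {α β : Type*} (rank : α → β → ℕ∞) (M' M : α → Option β) : Prop :=
  Nat.card {a // Prefers rank M M' a} < Nat.card {a // Prefers rank M' M a}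

open Function

section

variable {α β : Type*}

theorem isMatching_some_of_injective {f : α → β} (hf : Injective f) :
    IsMatching (fun a => some (f a)) :=
  fun _ _ _ h h' => hf (Option.some_injective _ (h.trans h'.symm))

theorem prefers_some_iff (rank : α → β → ℕ∞) (f g : α → β) (a : α) :
    Prefers rank (fun a => some (f a)) (fun a => some (g a)) a ↔ rank a (f a) < rank a (g a) := by
  simp [Prefers]

end

section

variable {G : Type*} [AddGroup G]

theorem Nat.card_subtype_add_right (p : G → Prop) (k : G) :
    Nat.card {a // p (a + k)} = Nat.card {b // p b} :=
  Nat.card_congr ((Equiv.addRight k).subtypeEquiv fun _ => Iff.rfl)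

theorem Nat.card_add_right_eq (k c : G) : Nat.card {a // a + k = c} = 1 := by
  rw [Nat.card_subtype_add_right (· = c)]
  exact Nat.card_unique

theorem Nat.card_add_right_ne [Fintype G] (k c : G) :
    Nat.card {a // a + k ≠ c} = Fintype.card G - 1 := by
  classical
  rw [Nat.card_subtype_add_right (· ≠ c), Nat.card_eq_fintype_card, Fintype.card_subtype_compl,
    Fintype.card_subtype_eq]

end

namespace CondorcetCycle

variable {n : ℕ}

def rotation (k : Fin (n + 3)) : Fin (n + 3) → Option (Fin (n + 3)) :=
  fun a => some (a + k)

def commonRank (_ b : Fin (n + 3)) : ℕ∞ :=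
  (b : ℕ)

theorem isMatching_rotation (k : Fin (n + 3)) : IsMatching (rotation k) :=
  isMatching_some_of_injective (add_left_injective k)

theorem commonRank_lt_iff (a b c : Fin (n + 3)) : commonRank a b < commonRank a c ↔ b < c := by
  simp [commonRank]

theorem prefers_rotation_iff (k a : Fin (n + 3)) :
    Prefers commonRank (rotation k) (rotation (k + 1)) a ↔ a + k ≠ Fin.last _ := by
  unfold rotation
  rw [prefers_some_iff, commonRank_lt_iff, ← add_assoc, Fin.lt_add_one_iff,
    Fin.lt_last_iff_ne_last]

theorem prefers_rotation_add_one_iff (k a : Fin (n + 3)) :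
    Prefers commonRank (rotation (k + 1)) (rotation k) a ↔ a + k = Fin.last _ := by
  unfold rotation
  rw [prefers_some_iff, commonRank_lt_iff, ← add_assoc, Fin.add_one_lt_iff]

theorem morePopular_rotation (k : Fin (n + 3)) :
    MorePopular commonRank (rotation k) (rotation (k + 1)) := by
  simp_rw [MorePopular, prefers_rotation_iff, prefers_rotation_add_one_iff,
    Nat.card_add_right_eq, Nat.card_add_right_ne, Fintype.card_fin]
  omega

end CondorcetCycle

open CondorcetCycle in
/-- The "more popular than" relation is not transitive: there is a bipartite preference
instance and matchings M1, M2, M3 with M1 ≺ M2, M2 ≺ M3 and M3 ≺ M1. -/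
theorem more_popular_not_transitive :
    ∃ (n m : ℕ) (rank : Fin n → Fin m → ℕ∞) (M1 M2 M3 : Fin n → Option (Fin m)),
      IsMatching M1 ∧ IsMatching M2 ∧ IsMatching M3 ∧
      MorePopular rank M2 M1 ∧ MorePopular rank M3 M2 ∧ MorePopular rank M1 M3 :=
  ⟨3, 3, commonRank, rotation 2, rotation 1, rotation 0, isMatching_rotation 2,
    isMatching_rotation 1, isMatching_rotation 0, morePopular_rotation 1, morePopular_rotation 0,
    morePopular_rotation 2⟩
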